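/- arXiv:1806.02333 — 3 statements merged into one kernel-verified Lean document; each statement's English description precedes it below -/
import Mathlib

section
/- Let P be the transition matrix of an irreducible, aperiodic, positive recurrent Markov chain on a countable state space with invariant distribution π. Then for all states i and j, the n-step transition probability p_{ij}^{(n)} converges to π_j as n → ∞. -/
open scoped BigOperators
open Classical

/-- `n`-step transition "matrix" for a Markov chain on a countable state space,
defined via `tsum` over intermediate states. -/
noncomputable def matPowC {I : Type*} (P : I → I → ℝ) : ℕ → I → I → ℝ
  | 0 => fun i j => if i = j then 1 else 0
  | n + 1 => fun i j => ∑' k, matPowC P n i k * P k j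

/-- First return probabilities: `firstReturn P i n` is the probability that the chain
started at `i` first returns to `i` at time `n`, defined by the standard renewal
recurrence `p_{ii}^{(n)} = ∑_{k=1}^{n} f_{ii}^{(k)} p_{ii}^{(n-k)}`. -/
noncomputable def firstReturn {I : Type*} (P : I → I → ℝ) (i : I) : ℕ → ℝ
  | 0 => 0
  | n + 1 =>
      matPowC P (n + 1) i i -
        ∑ k ∈ (Finset.range n).attach, firstReturn P i (k.1 + 1) * matPowC P (n - k.1) i i
  decreasing_by
    have := k.2
    simp only [Finset.mem_range] at this
    omega

section Helpers

variable {α β : Type*}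

lemma summable_unc {f : α → β → ℝ} (h0 : ∀ a b, 0 ≤ f a b)
    (h1 : ∀ a, Summable (f a)) (h2 : Summable fun a => ∑' b, f a b) :
    Summable (fun p : α × β => f p.1 p.2) :=
  (summable_prod_of_nonneg (fun p => h0 p.1 p.2)).2 ⟨h1, h2⟩

lemma summable_col {f : α → β → ℝ} (h0 : ∀ a b, 0 ≤ f a b)
    (h1 : ∀ a, Summable (f a)) (h2 : Summable fun a => ∑' b, f a b) (b : β) :
    Summable (fun a => f a b) :=
  (summable_unc h0 h1 h2).prod_symm.prod_factor b

lemma summable_colsum {f : α → β → ℝ} (h0 : ∀ a b, 0 ≤ f a b)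
    (h1 : ∀ a, Summable (f a)) (h2 : Summable fun a => ∑' b, f a b) :
    Summable (fun b => ∑' a, f a b) :=
  (summable_unc h0 h1 h2).prod_symm.prod

lemma tsum_swap {f : α → β → ℝ} (h0 : ∀ a b, 0 ≤ f a b)
    (h1 : ∀ a, Summable (f a)) (h2 : Summable fun a => ∑' b, f a b) :
    ∑' b, ∑' a, f a b = ∑' a, ∑' b, f a b :=
  Summable.tsum_comm' (summable_unc h0 h1 h2) h1 (fun b => summable_col h0 h1 h2 b)

end Helpers

section Kernel

variable {J : Type*}

/-- substochastic kernel -/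
def SubStoch (K : J → J → ℝ) : Prop :=
  (∀ i j, 0 ≤ K i j) ∧ (∀ i, Summable (K i)) ∧ (∀ i, ∑' j, K i j ≤ 1)

lemma SubStoch.nonneg {K : J → J → ℝ} (h : SubStoch K) (i j : J) : 0 ≤ K i j := h.1 i j
lemma SubStoch.summable {K : J → J → ℝ} (h : SubStoch K) (i : J) : Summable (K i) := h.2.1 i
lemma SubStoch.tsum_le {K : J → J → ℝ} (h : SubStoch K) (i : J) : ∑' j, K i j ≤ 1 := h.2.2 i

lemma SubStoch.entry_le_one {K : J → J → ℝ} (h : SubStoch K) (i j : J) : K i j ≤ 1 :=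
  le_trans (Summable.le_tsum (h.summable i) j (fun k _ => h.nonneg i k)) (h.tsum_le i)

def StochK (K : J → J → ℝ) : Prop :=
  (∀ i j, 0 ≤ K i j) ∧ (∀ i, HasSum (K i) 1)

lemma StochK.toSub {K : J → J → ℝ} (h : StochK K) : SubStoch K :=
  ⟨h.1, fun i => (h.2 i).summable, fun i => le_of_eq (h.2 i).tsum_eq⟩

/-- row vector times kernel: the master computation. -/
lemma row_mul_kernel {K : J → J → ℝ} (hK : SubStoch K) {a : J → ℝ}
    (ha0 : ∀ k, 0 ≤ a k) (has : Summable a) :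
    (∀ j, Summable fun k => a k * K k j) ∧
    (Summable fun j => ∑' k, a k * K k j) ∧
    (∑' j, ∑' k, a k * K k j = ∑' k, a k * (∑' j, K k j)) := by
  have h0 : ∀ k j, 0 ≤ a k * K k j := fun k j => mul_nonneg (ha0 k) (hK.nonneg k j)
  have h1 : ∀ k, Summable fun j => a k * K k j := fun k => (hK.summable k).mul_left _
  have h2 : Summable fun k => ∑' j, a k * K k j := by
    apply has.of_nonneg_of_le (fun k => tsum_nonneg (fun j => h0 k j))
    intro k
    rw [tsum_mul_left]
    calc a k * ∑' j, K k j ≤ a k * 1 := by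
          apply mul_le_mul_of_nonneg_left (hK.tsum_le k) (ha0 k)
      _ = a k := mul_one _
  refine ⟨fun j => summable_col h0 h1 h2 j, summable_colsum h0 h1 h2, ?_⟩
  rw [tsum_swap h0 h1 h2]
  exact tsum_congr fun k => tsum_mul_left

lemma SubStoch.matPow {K : J → J → ℝ} (hK : SubStoch K) (n : ℕ) : SubStoch (matPowC K n) := by
  induction n with
  | zero =>
    refine ⟨fun i j => ?_, fun i => ?_, fun i => ?_⟩
    · simp only [matPowC]; split <;> norm_num
    · simp only [matPowC]
      apply summable_of_ne_finset_zero (s := {i})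
      intro j hj
      simp only [Finset.mem_singleton] at hj
      simp [Ne.symm hj]
    · simp only [matPowC]
      rw [tsum_eq_single i (fun j hj => by simp [Ne.symm hj])]
      simp
  | succ n ih =>
    have key := fun i => row_mul_kernel hK (a := matPowC K n i) (ih.nonneg i) (ih.summable i)
    refine ⟨fun i j => ?_, fun i => ?_, fun i => ?_⟩
    · simp only [matPowC]
      exact tsum_nonneg fun k => mul_nonneg (ih.nonneg i k) (hK.nonneg k j)
    · simp only [matPowC]
      exact (key i).2.1
    · simp only [matPowC]
      rw [(key i).2.2]
      have hsum1 : Summable fun k => matPowC K n i k * ∑' j, K k j := by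
        apply (ih.summable i).of_nonneg_of_le
          (fun k => mul_nonneg (ih.nonneg i k) (tsum_nonneg fun j => hK.nonneg k j))
        exact fun k => mul_le_of_le_one_right (ih.nonneg i k) (hK.tsum_le k)
      calc ∑' k, matPowC K n i k * ∑' j, K k j ≤ ∑' k, matPowC K n i k := by
            apply Summable.tsum_le_tsum ?_ hsum1 (ih.summable i)
            exact fun k => mul_le_of_le_one_right (ih.nonneg i k) (hK.tsum_le k)
        _ ≤ 1 := ih.tsum_le i

end Kernel

section Kernel2
variable {J : Type*}

lemma summable_row_mul {K : J → J → ℝ} (hK : SubStoch K) {a : J → ℝ}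
    (ha0 : ∀ k, 0 ≤ a k) (has : Summable a) (j : J) :
    Summable fun k => a k * K k j :=
  (row_mul_kernel hK ha0 has).1 j

lemma tsum_row_mul_le {K : J → J → ℝ} (hK : SubStoch K) {a : J → ℝ}
    (ha0 : ∀ k, 0 ≤ a k) (has : Summable a) (j : J) :
    ∑' k, a k * K k j ≤ ∑' k, a k :=
  Summable.tsum_le_tsum (fun k => mul_le_of_le_one_right (ha0 k) (hK.entry_le_one k j))
    (summable_row_mul hK ha0 has j) has

lemma matPow_one {K : J → J → ℝ} (i j : J) : matPowC K 1 i j = K i j := by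
  simp only [matPowC]
  rw [tsum_eq_single i (fun k hk => by simp [Ne.symm hk])]
  simp

lemma matPow_add {K : J → J → ℝ} (hK : SubStoch K) (m : ℕ) :
    ∀ (n : ℕ) (i j : J), matPowC K (m + n) i j = ∑' k, matPowC K m i k * matPowC K n k j := by
  intro n
  induction n with
  | zero =>
    intro i j
    simp only [Nat.add_zero, matPowC]
    rw [tsum_eq_single j (fun k hk => by simp [hk])]
    simp
  | succ n ih =>
    intro i j
    have hm := hK.matPow m
    have hn := hK.matPow n
    have h0 : ∀ u k, 0 ≤ matPowC K m i u * matPowC K n u k * K k j :=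
      fun u k => mul_nonneg (mul_nonneg (hm.nonneg i u) (hn.nonneg u k)) (hK.nonneg k j)
    have h1 : ∀ u, Summable fun k => matPowC K m i u * matPowC K n u k * K k j := by
      intro u
      apply ((hn.summable u).mul_left (matPowC K m i u)).of_nonneg_of_le (h0 u)
      intro k
      exact mul_le_of_le_one_right (mul_nonneg (hm.nonneg i u) (hn.nonneg u k))
        (hK.entry_le_one k j)
    have h2 : Summable fun u => ∑' k, matPowC K m i u * matPowC K n u k * K k j := by
      apply (hm.summable i).of_nonneg_of_le (fun u => tsum_nonneg (h0 u))
      intro u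
      calc ∑' k, matPowC K m i u * matPowC K n u k * K k j
          = matPowC K m i u * ∑' k, matPowC K n u k * K k j := by
            rw [← tsum_mul_left]; exact tsum_congr fun k => mul_assoc _ _ _
        _ ≤ matPowC K m i u * 1 := by
            apply mul_le_mul_of_nonneg_left ?_ (hm.nonneg i u)
            exact le_trans (tsum_row_mul_le hK (hn.nonneg u) (hn.summable u) j) (hn.tsum_le u)
        _ = matPowC K m i u := mul_one _
    rw [show m + (n+1) = (m+n)+1 from rfl]
    simp only [matPowC]
    calc ∑' k, matPowC K (m+n) i k * K k j
        = ∑' k, (∑' u, matPowC K m i u * matPowC K n u k) * K k j := by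
          exact tsum_congr fun k => by rw [← ih i k]
      _ = ∑' k, ∑' u, matPowC K m i u * matPowC K n u k * K k j := by
          exact tsum_congr fun k => by rw [tsum_mul_right]
      _ = ∑' u, ∑' k, matPowC K m i u * matPowC K n u k * K k j := tsum_swap h0 h1 h2
      _ = ∑' u, matPowC K m i u * ∑' k, matPowC K n u k * K k j := by
          refine tsum_congr fun u => ?_
          rw [← tsum_mul_left]; exact tsum_congr fun k => mul_assoc _ _ _
      _ = ∑' u, matPowC K m i u * matPowC K (n+1) u j := by
          exact tsum_congr fun u => by simp only [matPowC]

lemma matPow_succ_front {K : J → J → ℝ} (hK : SubStoch K) (n : ℕ) (i j : J) :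
    matPowC K (n+1) i j = ∑' k, K i k * matPowC K n k j := by
  have h := matPow_add hK 1 n i j
  rw [show (1 : ℕ) + n = n + 1 from by omega] at h
  rw [h]
  exact tsum_congr fun k => by rw [matPow_one]

lemma matPow_mul_le {K : J → J → ℝ} (hK : SubStoch K) (m n : ℕ) (i k j : J) :
    matPowC K m i k * matPowC K n k j ≤ matPowC K (m + n) i j := by
  rw [matPow_add hK m n i j]
  apply Summable.le_tsum (summable_row_mul (hK.matPow n) ((hK.matPow m).nonneg i)
    ((hK.matPow m).summable i) j) k
  exact fun u _ => mul_nonneg ((hK.matPow m).nonneg i u) ((hK.matPow n).nonneg u j)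

lemma StochK.matPow {K : J → J → ℝ} (hK : StochK K) (n : ℕ) (i : J) :
    HasSum (matPowC K n i) 1 := by
  induction n with
  | zero =>
    have : (fun j => if i = j then (1:ℝ) else 0) = fun j => if j = i then 1 else 0 := by
      funext j
      by_cases h : i = j
      · simp [h]
      · simp [h, Ne.symm h]
    simp only [matPowC, this]
    exact hasSum_ite_eq i 1
  | succ n ih =>
    have hsub := hK.toSub.matPow (n+1)
    rw [(hsub.summable i).hasSum_iff]
    have key := row_mul_kernel hK.toSub (a := matPowC K n i)
      ((hK.toSub.matPow n).nonneg i) ih.summable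
    simp only [matPowC]
    rw [key.2.2]
    calc ∑' k, matPowC K n i k * ∑' j, K k j = ∑' k, matPowC K n i k := by
          refine tsum_congr fun k => ?_
          rw [(hK.2 k).tsum_eq, mul_one]
      _ = 1 := ih.tsum_eq

end Kernel2
section NT

variable {S : Set ℕ}

lemma smul_mem_of_add_closed (hadd : ∀ m ∈ S, ∀ n ∈ S, m + n ∈ S) :
    ∀ k, 1 ≤ k → ∀ a ∈ S, k * a ∈ S := by
  intro k hk
  induction k, hk using Nat.le_induction with
  | base => intro a ha; simpa using ha
  | succ k hk ih =>
    intro a ha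
    have : (k + 1) * a = k * a + a := by ring
    rw [this]
    exact hadd _ (ih a ha) _ ha

/-- Bezout over a finite subset, with nonnegative-combination parts. -/
lemma finset_bezout (hadd : ∀ m ∈ S, ∀ n ∈ S, m + n ∈ S) :
    ∀ F : Finset ℕ, (∀ x ∈ F, x ∈ S) → ∃ u v : ℕ,
      (u = 0 ∨ u ∈ S) ∧ (v = 0 ∨ v ∈ S) ∧ (u : ℤ) - v = F.gcd id := by
  -- helper : S₀ is closed under addition and ℕ-scaling
  have hadd0 : ∀ m, (m = 0 ∨ m ∈ S) → ∀ n, (n = 0 ∨ n ∈ S) → (m + n = 0 ∨ m + n ∈ S) := by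
    rintro m (rfl | hm) n (rfl | hn)
    · simp
    · simpa using Or.inr hn
    · simpa using Or.inr hm
    · exact Or.inr (hadd m hm n hn)
  have hsmul0 : ∀ k m, (m = 0 ∨ m ∈ S) → (k * m = 0 ∨ k * m ∈ S) := by
    rintro k m (rfl | hm)
    · simp
    rcases Nat.eq_zero_or_pos k with rfl | hk
    · simp
    · exact Or.inr (smul_mem_of_add_closed hadd k hk m hm)
  intro F
  induction F using Finset.induction_on with
  | empty => exact fun _ => ⟨0, 0, Or.inl rfl, Or.inl rfl, by simp⟩
  | @insert a F ha ih =>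
    intro hF
    obtain ⟨u, v, hu, hv, huv⟩ := ih (fun x hx => hF x (Finset.mem_insert_of_mem hx))
    have haS : a ∈ S := hF a (Finset.mem_insert_self a F)
    set g : ℕ := F.gcd id with hg
    have hbez := Nat.gcd_eq_gcd_ab a g
    set x : ℤ := Nat.gcdA a g
    set y : ℤ := Nat.gcdB a g
    refine ⟨x.toNat * a + y.toNat * u + (-y).toNat * v,
            (-x).toNat * a + y.toNat * v + (-y).toNat * u, ?_, ?_, ?_⟩
    · exact hadd0 _ (hadd0 _ (hsmul0 _ _ (Or.inr haS)) _ (hsmul0 _ _ hu)) _ (hsmul0 _ _ hv)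
    · exact hadd0 _ (hadd0 _ (hsmul0 _ _ (Or.inr haS)) _ (hsmul0 _ _ hv)) _ (hsmul0 _ _ hu)
    · rw [Finset.gcd_insert]
      have hx : (x.toNat : ℤ) - (-x).toNat = x := by
        rcases le_or_gt 0 x with h | h
        · rw [Int.toNat_of_nonneg h, Int.toNat_of_nonpos (by linarith)]; simp
        · rw [Int.toNat_of_nonpos (le_of_lt h), Int.toNat_of_nonneg (by linarith)]; simp
      have hy : (y.toNat : ℤ) - (-y).toNat = y := by
        rcases le_or_gt 0 y with h | h
        · rw [Int.toNat_of_nonneg h, Int.toNat_of_nonpos (by linarith)]; simp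
        · rw [Int.toNat_of_nonpos (le_of_lt h), Int.toNat_of_nonneg (by linarith)]; simp
      have hthis : ((Nat.gcd a g : ℕ) : ℤ) = a * x + g * y := hbez
      simp only [id]
      push_cast
      linear_combination -hthis + (a : ℤ) * hx + ((u : ℤ) - (v : ℤ)) * hy + y * huv

lemma add_closed_gcd_one_cofinite (h1 : ∀ n ∈ S, 1 ≤ n)
    (hadd : ∀ m ∈ S, ∀ n ∈ S, m + n ∈ S) (hne : S.Nonempty)
    (hgcd : ∀ d : ℕ, (∀ n ∈ S, d ∣ n) → d = 1) :
    ∃ N, ∀ n, N ≤ n → n ∈ S := by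
  obtain ⟨a0, ha0⟩ := hne
  -- the minimal gcd over finite subsets
  set T : Set ℕ := {d | ∃ F : Finset ℕ, (∀ x ∈ F, x ∈ S) ∧ F.Nonempty ∧ F.gcd id = d} with hT
  have hTne : T.Nonempty := by
    refine ⟨a0, {a0}, by simpa using ha0, ⟨a0, by simp⟩, by simp⟩
  have hmem := Nat.sInf_mem hTne
  set m := sInf T with hm
  obtain ⟨F, hFS, hFne, hFgcd⟩ := hmem
  have hmpos : 1 ≤ m := by
    obtain ⟨x, hx⟩ := hFne
    have hdvd : m ∣ x := hFgcd ▸ Finset.gcd_dvd hx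
    have := h1 x (hFS x hx)
    rcases Nat.eq_zero_or_pos m with h | h
    · rw [h, zero_dvd_iff] at hdvd
      omega
    · exact h
  have hdvdall : ∀ n ∈ S, m ∣ n := by
    intro n hn
    have hmem' : Nat.gcd n m ∈ T := by
      refine ⟨insert n F, ?_, ⟨n, Finset.mem_insert_self n F⟩, ?_⟩
      · intro x hx
        rcases Finset.mem_insert.1 hx with rfl | hx
        · exact hn
        · exact hFS x hx
      · rw [Finset.gcd_insert, hFgcd]; rfl
    have hle : m ≤ Nat.gcd n m := Nat.sInf_le hmem'
    have hdvd : Nat.gcd n m ∣ m := Nat.gcd_dvd_right n m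
    have heq : Nat.gcd n m = m := le_antisymm (Nat.le_of_dvd hmpos hdvd) hle
    rw [← heq]
    exact Nat.gcd_dvd_left n m
  have hm1 : m = 1 := hgcd m hdvdall
  obtain ⟨u, v, hu, hv, huv⟩ := finset_bezout hadd F hFS
  rw [hFgcd, hm1] at huv
  have huv' : u = v + 1 := by push_cast at huv; omega
  rcases hv with rfl | hvS
  · have h1S : (1 : ℕ) ∈ S := by
      rcases hu with h | h
      · omega
      · rw [huv'] at h; simpa using h
    refine ⟨1, fun n hn => ?_⟩
    have := smul_mem_of_add_closed hadd n hn 1 h1S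
    simpa using this
  · have huS : u ∈ S := by
      rcases hu with h | h
      · omega
      · exact h
    rw [huv'] at huS
    refine ⟨v * v, fun n hn => ?_⟩
    set q := n / v with hq
    set r := n % v with hr
    have hv1 : 1 ≤ v := h1 v hvS
    have hrv : r < v := Nat.mod_lt n hv1
    have hqv : v ≤ q := by
      rw [hq, Nat.le_div_iff_mul_le hv1]
      exact hn
    have hmod : v * q + r = n := Nat.div_add_mod n v
    have hqr : r ≤ q := le_trans (le_of_lt hrv) hqv
    have hkey : (q - r) * v + r * (v + 1) = n := by
      zify [hqr]
      have hmodz : (v : ℤ) * q + r = n := by exact_mod_cast hmod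
      linear_combination hmodz
    rcases Nat.eq_zero_or_pos r with hr0 | hrpos
    · rw [hr0] at hkey
      simp at hkey
      rw [← hkey]
      exact smul_mem_of_add_closed hadd q (by omega) v hvS
    · rw [← hkey]
      exact hadd _ (smul_mem_of_add_closed hadd (q - r) (by omega) v hvS)
        _ (smul_mem_of_add_closed hadd r hrpos (v+1) huS)

end NT

section ProdChain

variable {I : Type*}

/-- product (coupled) chain kernel -/
def pairK (P : I → I → ℝ) : (I × I) → (I × I) → ℝ := fun s t => P s.1 t.1 * P s.2 t.2

/-- product chain kernel killed on the diagonal target -/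
noncomputable def offDiagK (P : I → I → ℝ) : (I × I) → (I × I) → ℝ :=
  fun s t => if t.1 = t.2 then 0 else pairK P s t

/-- probability of avoiding the diagonal for the first `n` steps -/
noncomputable def avoidG (P : I → I → ℝ) : ℕ → (I × I) → ℝ
  | 0 => fun _ => 1
  | n + 1 => fun s => ∑' t, offDiagK P s t * avoidG P n t

variable {P : I → I → ℝ}

lemma pairK_stoch (hP : StochK P) : StochK (pairK P) := by
  constructor
  · exact fun s t => mul_nonneg (hP.1 s.1 t.1) (hP.1 s.2 t.2)
  · intro s
    have h := (hP.2 s.1).mul (hP.2 s.2) ?_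
    · rw [mul_one] at h; exact h
    · apply summable_unc (fun a b => mul_nonneg (hP.1 s.1 a) (hP.1 s.2 b))
        (fun a => (hP.2 s.2).summable.mul_left _)
      apply Summable.congr ((hP.2 s.1).summable.mul_right (∑' b, P s.2 b))
      intro a
      exact (tsum_mul_left).symm

lemma offDiagK_nonneg (hP : StochK P) (s t : I × I) : 0 ≤ offDiagK P s t := by
  unfold offDiagK
  split
  · exact le_refl 0
  · exact (pairK_stoch hP).1 s t

lemma offDiagK_le (hP : StochK P) (s t : I × I) : offDiagK P s t ≤ pairK P s t := by
  unfold offDiagK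
  split
  · exact (pairK_stoch hP).1 s t
  · exact le_refl _

lemma offDiagK_sub (hP : StochK P) : SubStoch (offDiagK P) := by
  have hQ := pairK_stoch hP
  have hsum : ∀ s, Summable (offDiagK P s) := fun s =>
    ((hQ.2 s).summable).of_nonneg_of_le (offDiagK_nonneg hP s) (offDiagK_le hP s)
  refine ⟨offDiagK_nonneg hP, hsum, fun s => ?_⟩
  calc ∑' t, offDiagK P s t ≤ ∑' t, pairK P s t :=
        Summable.tsum_le_tsum (offDiagK_le hP s) (hsum s) (hQ.2 s).summable
    _ = 1 := (hQ.2 s).tsum_eq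

/-- `matPowC` of the product kernel is the product of `matPowC`s. -/
lemma pairPow (hP : StochK P) (n : ℕ) (s t : I × I) :
    matPowC (pairK P) n s t = matPowC P n s.1 t.1 * matPowC P n s.2 t.2 := by
  induction n generalizing t with
  | zero =>
    simp only [matPowC]
    by_cases h1 : s.1 = t.1
    · by_cases h2 : s.2 = t.2
      · have h : s = t := Prod.ext_iff.mpr ⟨h1, h2⟩
        simp [h, h1, h2]
      · have h : ¬ s = t := fun h => h2 (by rw [h])
        simp [h, h1, h2]
    · have h : ¬ s = t := fun h => h1 (by rw [h])
      simp [h, h1]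
  | succ n ih =>
    have hf : HasSum (fun a => matPowC P n s.1 a * P a t.1) (matPowC P (n+1) s.1 t.1) := by
      have hsumm : Summable fun a => matPowC P n s.1 a * P a t.1 :=
        summable_row_mul hP.toSub ((hP.toSub.matPow n).nonneg s.1)
          ((hP.toSub.matPow n).summable s.1) t.1
      rw [show matPowC P (n+1) s.1 t.1 = ∑' a, matPowC P n s.1 a * P a t.1 from by
        simp only [matPowC]]
      exact hsumm.hasSum
    have hg : HasSum (fun b => matPowC P n s.2 b * P b t.2) (matPowC P (n+1) s.2 t.2) := by
      have hsumm : Summable fun b => matPowC P n s.2 b * P b t.2 :=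
        summable_row_mul hP.toSub ((hP.toSub.matPow n).nonneg s.2)
          ((hP.toSub.matPow n).summable s.2) t.2
      rw [show matPowC P (n+1) s.2 t.2 = ∑' b, matPowC P n s.2 b * P b t.2 from by
        simp only [matPowC]]
      exact hsumm.hasSum
    have hfg : Summable fun u : I × I =>
        (matPowC P n s.1 u.1 * P u.1 t.1) * (matPowC P n s.2 u.2 * P u.2 t.2) := by
      apply summable_unc
        (fun a b => mul_nonneg (mul_nonneg ((hP.toSub.matPow n).nonneg s.1 a) (hP.1 a t.1))
          (mul_nonneg ((hP.toSub.matPow n).nonneg s.2 b) (hP.1 b t.2)))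
        (fun a => hg.summable.mul_left _)
      apply Summable.congr (hf.summable.mul_right (matPowC P (n+1) s.2 t.2))
      intro a
      rw [← hg.tsum_eq, tsum_mul_left]
    have hmul := hf.mul hg hfg
    have hL : matPowC (pairK P) (n+1) s t = ∑' u : I × I, matPowC (pairK P) n s u * pairK P u t := by
      simp only [matPowC]
    rw [hL, ← hmul.tsum_eq]
    apply tsum_congr
    intro u
    rw [ih]
    simp only [pairK]
    ring

end ProdChain

section GLemmas

variable {I : Type*} {P : I → I → ℝ}

lemma avoidG_nonneg (hP : StochK P) : ∀ (n : ℕ) (s : I × I), 0 ≤ avoidG P n s := by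
  intro n
  induction n with
  | zero => intro s; simp only [avoidG]; norm_num
  | succ n ih =>
    intro s
    simp only [avoidG]
    exact tsum_nonneg fun t => mul_nonneg (offDiagK_nonneg hP s t) (ih t)

lemma summable_off_mul (hP : StochK P) {h : (I × I) → ℝ} (hb : ∀ t, |h t| ≤ 1) (s : I × I) :
    Summable fun t => offDiagK P s t * h t := by
  apply Summable.of_norm_bounded ((offDiagK_sub hP).summable s)
  intro t
  rw [norm_mul, Real.norm_eq_abs, Real.norm_eq_abs, abs_of_nonneg (offDiagK_nonneg hP s t)]
  exact mul_le_of_le_one_right (offDiagK_nonneg hP s t) (hb t)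

lemma avoidG_le_one (hP : StochK P) : ∀ (n : ℕ) (s : I × I), avoidG P n s ≤ 1 := by
  intro n
  induction n with
  | zero => intro s; simp only [avoidG]; exact le_refl 1
  | succ n ih =>
    intro s
    simp only [avoidG]
    have hb : ∀ t, |avoidG P n t| ≤ 1 := fun t => by
      rw [abs_of_nonneg (avoidG_nonneg hP n t)]; exact ih t
    calc ∑' t, offDiagK P s t * avoidG P n t ≤ ∑' t, offDiagK P s t :=
          Summable.tsum_le_tsum (fun t => mul_le_of_le_one_right (offDiagK_nonneg hP s t) (ih t))
            (summable_off_mul hP hb s) ((offDiagK_sub hP).summable s)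
      _ ≤ 1 := (offDiagK_sub hP).tsum_le s

lemma avoidG_abs_le_one (hP : StochK P) (n : ℕ) (t : I × I) : |avoidG P n t| ≤ 1 := by
  rw [abs_of_nonneg (avoidG_nonneg hP n t)]; exact avoidG_le_one hP n t

lemma avoidG_antitone (hP : StochK P) : ∀ (n : ℕ) (s : I × I), avoidG P (n+1) s ≤ avoidG P n s := by
  intro n
  induction n with
  | zero =>
    intro s
    have := avoidG_le_one hP 1 s
    simpa only [avoidG] using this
  | succ n ih =>
    intro s
    simp only [avoidG]
    exact Summable.tsum_le_tsum
      (fun t => mul_le_mul_of_nonneg_left (ih t) (offDiagK_nonneg hP s t))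
      (summable_off_mul hP (avoidG_abs_le_one hP (n+1)) s)
      (summable_off_mul hP (avoidG_abs_le_one hP n) s)

lemma exists_pos_of_tsum_pos {α : Type*} {f : α → ℝ} (h0 : ∀ a, 0 ≤ f a)
    (h : 0 < ∑' a, f a) : ∃ a, 0 < f a := by
  by_contra hc
  push_neg at hc
  have hz : ∀ a, f a = 0 := fun a => le_antisymm (hc a) (h0 a)
  rw [tsum_congr hz, tsum_zero] at h
  exact lt_irrefl 0 h

lemma eventually_pos (hP : StochK P)
    (hirr : ∀ i j, ∃ n ≥ 1, 0 < matPowC P n i j)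
    (haper : ∀ i, ∀ d : ℕ, (∀ n, 1 ≤ n → 0 < matPowC P n i i → d ∣ n) → d = 1)
    (i j : I) : ∃ N, ∀ n, N ≤ n → 0 < matPowC P n i j := by
  set S : Set ℕ := {n | 1 ≤ n ∧ 0 < matPowC P n i i} with hS
  have hcof : ∃ N, ∀ n, N ≤ n → n ∈ S := by
    apply add_closed_gcd_one_cofinite
    · exact fun n hn => hn.1
    · intro m hm n hn
      constructor
      · have := hm.1; omega
      · exact lt_of_lt_of_le (mul_pos hm.2 hn.2) (matPow_mul_le hP.toSub m n i i i)
    · obtain ⟨n, hn1, hnpos⟩ := hirr i i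
      exact ⟨n, hn1, hnpos⟩
    · intro d hd
      exact haper i d (fun n h1 hpos => hd n ⟨h1, hpos⟩)
  obtain ⟨N0, hN0⟩ := hcof
  obtain ⟨m0, hm1, hm0⟩ := hirr i j
  refine ⟨N0 + m0, fun n hn => ?_⟩
  have h1 : N0 ≤ n - m0 := by omega
  have h2 : (n - m0) + m0 = n := by omega
  have h3 := hN0 (n - m0) h1
  calc (0:ℝ) < matPowC P (n - m0) i i * matPowC P m0 i j := mul_pos h3.2 hm0
    _ ≤ matPowC P ((n - m0) + m0) i j := matPow_mul_le hP.toSub _ _ i i j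
    _ = matPowC P n i j := by rw [h2]

lemma pi_pow_invariant (hP : StochK P) {π : I → ℝ} (hπnonneg : ∀ i, 0 ≤ π i)
    (hπsum : Summable π) (hπinv : ∀ j, HasSum (fun i => π i * P i j) (π j)) :
    ∀ (n : ℕ) (j : I), HasSum (fun i => π i * matPowC P n i j) (π j) := by
  intro n
  induction n with
  | zero =>
    intro j
    have hfun : (fun i => π i * matPowC P 0 i j) = fun i => if i = j then π j else 0 := by
      funext i
      simp only [matPowC]
      by_cases h : i = j
      · simp [h]
      · simp [h]
    rw [hfun]
    exact hasSum_ite_eq j (π j)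
  | succ n ih =>
    intro j
    have hsub := hP.toSub
    have hsummable : Summable fun i => π i * matPowC P (n+1) i j :=
      hπsum.of_nonneg_of_le
        (fun i => mul_nonneg (hπnonneg i) ((hsub.matPow (n+1)).nonneg i j))
        (fun i => mul_le_of_le_one_right (hπnonneg i) ((hsub.matPow (n+1)).entry_le_one i j))
    rw [hsummable.hasSum_iff]
    have h0 : ∀ i k, 0 ≤ π i * (matPowC P n i k * P k j) := fun i k =>
      mul_nonneg (hπnonneg i) (mul_nonneg ((hsub.matPow n).nonneg i k) (hP.1 k j))
    have h1 : ∀ i, Summable fun k => π i * (matPowC P n i k * P k j) := fun i =>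
      (summable_row_mul hsub ((hsub.matPow n).nonneg i) ((hsub.matPow n).summable i) j).mul_left _
    have h2 : Summable fun i => ∑' k, π i * (matPowC P n i k * P k j) := by
      apply hπsum.of_nonneg_of_le (fun i => tsum_nonneg (h0 i))
      intro i
      rw [tsum_mul_left]
      apply mul_le_of_le_one_right (hπnonneg i)
      exact le_trans
        (tsum_row_mul_le hsub ((hsub.matPow n).nonneg i) ((hsub.matPow n).summable i) j)
        ((hsub.matPow n).tsum_le i)
    calc ∑' i, π i * matPowC P (n+1) i j
        = ∑' i, ∑' k, π i * (matPowC P n i k * P k j) := by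
          refine tsum_congr fun i => ?_
          simp only [matPowC]
          exact (tsum_mul_left).symm
      _ = ∑' k, ∑' i, π i * (matPowC P n i k * P k j) := (tsum_swap h0 h1 h2).symm
      _ = ∑' k, (∑' i, π i * matPowC P n i k) * P k j := by
          refine tsum_congr fun k => ?_
          rw [← tsum_mul_right]
          exact tsum_congr fun i => by ring
      _ = ∑' k, π k * P k j := by
          refine tsum_congr fun k => ?_
          rw [(ih k).tsum_eq]
      _ = π j := (hπinv j).tsum_eq

set_option maxHeartbeats 1000000 in
lemma coupling_bound (hP : StochK P) (j : I) :
    ∀ (n : ℕ) (s : I × I), |matPowC P n s.1 j - matPowC P n s.2 j| ≤ avoidG P n s := by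
  have hsub := hP.toSub
  have habs : ∀ (n : ℕ) (t : I × I), |matPowC P n t.1 j - matPowC P n t.2 j| ≤ 1 := by
    intro n t
    have h1 := (hsub.matPow n).nonneg t.1 j
    have h2 := (hsub.matPow n).nonneg t.2 j
    have h3 := (hsub.matPow n).entry_le_one t.1 j
    have h4 := (hsub.matPow n).entry_le_one t.2 j
    rw [abs_le]
    constructor <;> linarith
  intro n
  induction n with
  | zero =>
    intro s
    simp only [avoidG]
    exact habs 0 s
  | succ n ih =>
    intro s
    -- identity : d (n+1) s = ∑' t, pairK P s t * d n t
    have hfa : HasSum (fun a => P s.1 a * matPowC P n a j) (matPowC P (n+1) s.1 j) := by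
      have hsm : Summable fun a => P s.1 a * matPowC P n a j :=
        summable_row_mul (hsub.matPow n) (hP.1 s.1) (hP.2 s.1).summable j
      rw [matPow_succ_front hsub n s.1 j]
      exact hsm.hasSum
    have hgb : HasSum (fun b => P s.2 b * matPowC P n b j) (matPowC P (n+1) s.2 j) := by
      have hsm : Summable fun b => P s.2 b * matPowC P n b j :=
        summable_row_mul (hsub.matPow n) (hP.1 s.2) (hP.2 s.2).summable j
      rw [matPow_succ_front hsub n s.2 j]
      exact hsm.hasSum
    have hsum1 : Summable fun t : I × I => (P s.1 t.1 * matPowC P n t.1 j) * P s.2 t.2 := by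
      apply summable_unc
        (fun a b => mul_nonneg (mul_nonneg (hP.1 s.1 a) ((hsub.matPow n).nonneg a j)) (hP.1 s.2 b))
        (fun a => (hP.2 s.2).summable.mul_left _)
      apply Summable.congr (hfa.summable.mul_right (∑' b, P s.2 b))
      intro a
      exact (tsum_mul_left).symm
    have hsum2 : Summable fun t : I × I => P s.1 t.1 * (P s.2 t.2 * matPowC P n t.2 j) := by
      apply summable_unc
        (fun a b => mul_nonneg (hP.1 s.1 a) (mul_nonneg (hP.1 s.2 b) ((hsub.matPow n).nonneg b j)))
        (fun a => hgb.summable.mul_left _)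
      apply Summable.congr ((hP.2 s.1).summable.mul_right (matPowC P (n+1) s.2 j))
      intro a
      rw [← hgb.tsum_eq, tsum_mul_left]
    have h1 : HasSum (fun t : I × I => (P s.1 t.1 * matPowC P n t.1 j) * P s.2 t.2)
        (matPowC P (n+1) s.1 j * 1) := hfa.mul (hP.2 s.2) hsum1
    have h2 : HasSum (fun t : I × I => P s.1 t.1 * (P s.2 t.2 * matPowC P n t.2 j))
        (1 * matPowC P (n+1) s.2 j) := (hP.2 s.1).mul hgb hsum2
    have hid : HasSum
        (fun t : I × I => pairK P s t * (matPowC P n t.1 j - matPowC P n t.2 j))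
        (matPowC P (n+1) s.1 j - matPowC P (n+1) s.2 j) := by
      have hss := h1.sub h2
      rw [mul_one, one_mul] at hss
      have heq : (fun t : I × I => (P s.1 t.1 * matPowC P n t.1 j) * P s.2 t.2
          - P s.1 t.1 * (P s.2 t.2 * matPowC P n t.2 j))
          = fun t : I × I => pairK P s t * (matPowC P n t.1 j - matPowC P n t.2 j) := by
        funext t
        simp only [pairK]
        ring
      rw [← heq]
      exact hss
    have hoffid : (∑' t : I × I, pairK P s t * (matPowC P n t.1 j - matPowC P n t.2 j))
        = ∑' t, offDiagK P s t * (matPowC P n t.1 j - matPowC P n t.2 j) := by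
      refine tsum_congr fun t => ?_
      by_cases h : t.1 = t.2
      · rw [show matPowC P n t.1 j = matPowC P n t.2 j from by rw [h]]
        simp
      · simp only [offDiagK, if_neg h]
    have habs_sum : Summable fun t : I × I =>
        |offDiagK P s t * (matPowC P n t.1 j - matPowC P n t.2 j)| := by
      apply ((offDiagK_sub hP).summable s).of_nonneg_of_le (fun t => abs_nonneg _)
      intro t
      rw [abs_mul, abs_of_nonneg (offDiagK_nonneg hP s t)]
      exact mul_le_of_le_one_right (offDiagK_nonneg hP s t) (habs n t)
    calc |matPowC P (n+1) s.1 j - matPowC P (n+1) s.2 j|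
        = |∑' t, offDiagK P s t * (matPowC P n t.1 j - matPowC P n t.2 j)| := by
          rw [← hid.tsum_eq, hoffid]
      _ ≤ ∑' t, |offDiagK P s t * (matPowC P n t.1 j - matPowC P n t.2 j)| := by
          have hn := norm_tsum_le_tsum_norm (f := fun t : I × I =>
            offDiagK P s t * (matPowC P n t.1 j - matPowC P n t.2 j))
            (by simp only [Real.norm_eq_abs]; exact habs_sum)
          simp only [Real.norm_eq_abs] at hn
          exact hn
      _ ≤ ∑' t, offDiagK P s t * avoidG P n t := by
          apply Summable.tsum_le_tsum ?_ habs_sum (summable_off_mul hP (avoidG_abs_le_one hP n) s)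
          intro t
          rw [abs_mul, abs_of_nonneg (offDiagK_nonneg hP s t)]
          exact mul_le_mul_of_nonneg_left (ih t) (offDiagK_nonneg hP s t)
      _ = avoidG P (n+1) s := by simp only [avoidG]

end GLemmas

section Reach

variable {I : Type*} {P : I → I → ℝ}

lemma reach_off (hP : StochK P) :
    ∀ (n : ℕ) (s : I × I), ¬ s.1 = s.2 → ∀ a : I, 0 < matPowC (pairK P) n (a,a) s →
      ∃ (b : I) (m : ℕ), 0 < matPowC (offDiagK P) m (b,b) s := by
  have hQ := pairK_stoch hP
  have hoff := offDiagK_sub hP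
  intro n
  induction n with
  | zero =>
    intro s hs a hpos
    simp only [matPowC] at hpos
    by_cases h : (a,a) = s
    · exact absurd (by rw [← h]) hs
    · rw [if_neg h] at hpos; exact absurd hpos (lt_irrefl 0)
  | succ n ih =>
    intro s hs a hpos
    simp only [matPowC] at hpos
    obtain ⟨u, hu⟩ := exists_pos_of_tsum_pos
      (fun u => mul_nonneg ((hQ.toSub.matPow n).nonneg (a,a) u) (hQ.1 u s)) hpos
    have hu1 : 0 < matPowC (pairK P) n (a,a) u := by
      rcases ((hQ.toSub.matPow n).nonneg (a,a) u).lt_or_eq with h | h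
      · exact h
      · rw [← h] at hu; simp at hu
    have hu2 : 0 < pairK P u s := by
      rcases (hQ.1 u s).lt_or_eq with h | h
      · exact h
      · rw [← h] at hu; simp at hu
    have hoffus : 0 < offDiagK P u s := by
      rw [show offDiagK P u s = pairK P u s from by simp only [offDiagK, if_neg hs]]
      exact hu2
    by_cases hud : u.1 = u.2
    · refine ⟨u.1, 1, ?_⟩
      rw [matPow_one]
      have : ((u.1, u.1) : I × I) = u := by
        rw [Prod.ext_iff]
        exact ⟨rfl, hud⟩
      rw [this]
      exact hoffus
    · obtain ⟨b, m, hbm⟩ := ih u hud a hu1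
      refine ⟨b, m + 1, ?_⟩
      have hle : matPowC (offDiagK P) m (b,b) u * offDiagK P u s
          ≤ matPowC (offDiagK P) (m+1) (b,b) s := by
        have : matPowC (offDiagK P) (m+1) (b,b) s
            = ∑' k, matPowC (offDiagK P) m (b,b) k * offDiagK P k s := by
          simp only [matPowC]
        rw [this]
        apply Summable.le_tsum (summable_row_mul hoff ((hoff.matPow m).nonneg (b,b))
          ((hoff.matPow m).summable (b,b)) s) u
        exact fun k _ => mul_nonneg ((hoff.matPow m).nonneg (b,b) k) (hoff.nonneg k s)
      exact lt_of_lt_of_le (mul_pos hbm hoffus) hle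

lemma beta_prop (hP : StochK P) {β : (I × I) → ℝ} (hβ0 : ∀ s, 0 ≤ β s) (hβ1 : ∀ s, β s ≤ 1)
    (hrec : ∀ s, β s = ∑' t, offDiagK P s t * β t) :
    ∀ (m : ℕ) (s : I × I), β s = ∑' t, matPowC (offDiagK P) m s t * β t := by
  have hoff := offDiagK_sub hP
  have hβabs : ∀ t, |β t| ≤ 1 := fun t => by
    rw [abs_of_nonneg (hβ0 t)]; exact hβ1 t
  intro m
  induction m with
  | zero =>
    intro s
    rw [tsum_eq_single s (fun t ht => by
      simp only [matPowC]
      rw [if_neg (Ne.symm ht)]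
      exact zero_mul _)]
    simp [matPowC]
  | succ m ih =>
    intro s
    have h0 : ∀ t u, 0 ≤ matPowC (offDiagK P) m s t * (offDiagK P t u * β u) := fun t u =>
      mul_nonneg ((hoff.matPow m).nonneg s t) (mul_nonneg (hoff.nonneg t u) (hβ0 u))
    have h1 : ∀ t, Summable fun u => matPowC (offDiagK P) m s t * (offDiagK P t u * β u) :=
      fun t => (summable_off_mul hP hβabs t).mul_left _
    have h2 : Summable fun t => ∑' u, matPowC (offDiagK P) m s t * (offDiagK P t u * β u) := by
      have he : ∀ t, ∑' u, matPowC (offDiagK P) m s t * (offDiagK P t u * β u)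
          = matPowC (offDiagK P) m s t * β t := fun t => by
        rw [tsum_mul_left, ← hrec t]
      apply Summable.congr ?_ (fun t => (he t).symm)
      apply ((hoff.matPow m).summable s).of_nonneg_of_le
        (fun t => mul_nonneg ((hoff.matPow m).nonneg s t) (hβ0 t))
        (fun t => mul_le_of_le_one_right ((hoff.matPow m).nonneg s t) (hβ1 t))
    calc β s = ∑' t, matPowC (offDiagK P) m s t * β t := ih s
      _ = ∑' t, ∑' u, matPowC (offDiagK P) m s t * (offDiagK P t u * β u) := by
          refine tsum_congr fun t => ?_
          rw [tsum_mul_left, ← hrec t]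
      _ = ∑' u, ∑' t, matPowC (offDiagK P) m s t * (offDiagK P t u * β u) :=
          (tsum_swap h0 h1 h2).symm
      _ = ∑' u, (∑' t, matPowC (offDiagK P) m s t * offDiagK P t u) * β u := by
          refine tsum_congr fun u => ?_
          rw [← tsum_mul_right]
          exact tsum_congr fun t => by ring
      _ = ∑' u, matPowC (offDiagK P) (m+1) s u * β u := by
          refine tsum_congr fun u => ?_
          congr 1

end Reach

/-- Theorem (convergence to equilibrium for irreducible, aperiodic, positive recurrent
countable Markov chains): `p_{ij}^{(n)} → π_j` as `n → ∞`. -/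
theorem markov_convergence_to_equilibrium
    {I : Type*} [Countable I] (P : I → I → ℝ) (π : I → ℝ)
    (hPnonneg : ∀ i j, 0 ≤ P i j)
    (hPstoch : ∀ i, HasSum (P i) 1)
    (hirr : ∀ i j, ∃ n ≥ 1, 0 < matPowC P n i j)
    (haper : ∀ i, ∀ d : ℕ, (∀ n, 1 ≤ n → 0 < matPowC P n i i → d ∣ n) → d = 1)
    (hposrec : ∀ i, (HasSum (fun n : ℕ => firstReturn P i n) 1) ∧
        Summable (fun n : ℕ => (n : ℝ) * firstReturn P i n))
    (hπnonneg : ∀ i, 0 ≤ π i)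
    (hπsum : HasSum π 1)
    (hπinv : ∀ j, HasSum (fun i => π i * P i j) (π j)) :
    ∀ i j, Filter.Tendsto (fun n => matPowC P n i j) Filter.atTop (nhds (π j)) := by
  intro i j
  have hP : StochK P := ⟨hPnonneg, hPstoch⟩
  have hsub := hP.toSub
  have hoff := offDiagK_sub hP
  -- positivity of π
  have hπn := pi_pow_invariant hP hπnonneg hπsum.summable hπinv
  have hπpos : ∀ k, 0 < π k := by
    have hex : ∃ a, 0 < π a := by
      by_contra hc
      push_neg at hc
      have hz : ∀ a, π a = 0 := fun a => le_antisymm (hc a) (hπnonneg a)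
      have h0 : HasSum π 0 := by
        rw [show π = fun _ => (0:ℝ) from funext hz]
        exact hasSum_zero
      have h01 := hπsum.unique h0
      norm_num at h01
    obtain ⟨a, ha⟩ := hex
    intro k
    obtain ⟨n, _, hnpos⟩ := hirr a k
    have hterm : π a * matPowC P n a k ≤ π k := by
      rw [← (hπn n k).tsum_eq]
      exact Summable.le_tsum (hπn n k).summable a
        (fun b _ => mul_nonneg (hπnonneg b) ((hsub.matPow n).nonneg b k))
    exact lt_of_lt_of_le (mul_pos ha hnpos) hterm
  -- the escape-probability function β and its basic properties
  have hbdd : ∀ s : I × I, BddBelow (Set.range fun n => avoidG P n s) := by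
    intro s
    refine ⟨0, ?_⟩
    rintro x ⟨n, rfl⟩
    exact avoidG_nonneg hP n s
  have hGanti : ∀ s : I × I, Antitone fun n => avoidG P n s := fun s =>
    antitone_nat_of_succ_le (fun n => avoidG_antitone hP n s)
  set β : (I × I) → ℝ := fun s => ⨅ n, avoidG P n s with hβdef
  have hGtend : ∀ s : I × I, Filter.Tendsto (fun n => avoidG P n s) Filter.atTop (nhds (β s)) :=
    fun s => tendsto_atTop_ciInf (hGanti s) (hbdd s)
  have hβ0 : ∀ s, 0 ≤ β s := fun s => le_ciInf (fun n => avoidG_nonneg hP n s)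
  have hβle : ∀ (n : ℕ) (s : I × I), β s ≤ avoidG P n s := fun n s => ciInf_le (hbdd s) n
  have hβ1 : ∀ s, β s ≤ 1 := fun s => le_trans (hβle 0 s) (avoidG_le_one hP 0 s)
  -- β satisfies the one-step recursion
  have hβrec : ∀ s, β s = ∑' t, offDiagK P s t * β t := by
    intro s
    have h1 : Filter.Tendsto (fun n => avoidG P (n+1) s) Filter.atTop (nhds (β s)) :=
      (hGtend s).comp (Filter.tendsto_add_atTop_nat 1)
    have h2 : Filter.Tendsto (fun n => ∑' t, offDiagK P s t * avoidG P n t) Filter.atTop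
        (nhds (∑' t, offDiagK P s t * β t)) := by
      apply tendsto_tsum_of_dominated_convergence (hoff.summable s)
      · exact fun t => (hGtend t).const_mul _
      · refine Filter.Eventually.of_forall (fun n t => ?_)
        rw [Real.norm_eq_abs, abs_mul, abs_of_nonneg (hoff.nonneg s t)]
        exact mul_le_of_le_one_right (hoff.nonneg s t) (avoidG_abs_le_one hP n t)
    have h3 : (fun n => avoidG P (n+1) s) = fun n => ∑' t, offDiagK P s t * avoidG P n t := by
      funext n
      simp only [avoidG]
    rw [h3] at h1
    exact tendsto_nhds_unique h1 h2
  -- the product invariant measure μ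
  set μ : (I × I) → ℝ := fun s => π s.1 * π s.2 with hμdef
  have hμ0 : ∀ s, 0 ≤ μ s := fun s => mul_nonneg (hπnonneg s.1) (hπnonneg s.2)
  have hμpos : ∀ s, 0 < μ s := fun s => mul_pos (hπpos s.1) (hπpos s.2)
  have hμsum : Summable μ := by
    apply summable_unc (fun a b => mul_nonneg (hπnonneg a) (hπnonneg b))
      (fun a => hπsum.summable.mul_left _)
    apply Summable.congr (hπsum.summable.mul_right (∑' b, π b))
    intro a
    exact (tsum_mul_left).symm
  have hμQ : ∀ t : I × I, ∑' s : I × I, μ s * pairK P s t = μ t := by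
    intro t
    have hf := hπinv t.1
    have hg := hπinv t.2
    have hsumm : Summable fun s : I × I => (π s.1 * P s.1 t.1) * (π s.2 * P s.2 t.2) := by
      apply summable_unc
        (fun a b => mul_nonneg (mul_nonneg (hπnonneg a) (hPnonneg a t.1))
          (mul_nonneg (hπnonneg b) (hPnonneg b t.2)))
        (fun a => hg.summable.mul_left _)
      apply Summable.congr (hf.summable.mul_right (π t.2))
      intro a
      rw [← hg.tsum_eq, tsum_mul_left]
    have hmul := hf.mul hg hsumm
    have heq : (fun s : I × I => μ s * pairK P s t)
        = fun s : I × I => (π s.1 * P s.1 t.1) * (π s.2 * P s.2 t.2) := by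
      funext s
      simp only [hμdef, pairK]
      ring
    rw [heq, hmul.tsum_eq]
  have hμoff : ∀ t : I × I, ∑' s : I × I, μ s * offDiagK P s t
      = if t.1 = t.2 then 0 else μ t := by
    intro t
    by_cases h : t.1 = t.2
    · rw [if_pos h]
      have hz : ∀ s : I × I, μ s * offDiagK P s t = 0 := fun s => by
        simp [offDiagK, if_pos h]
      rw [tsum_congr hz, tsum_zero]
    · rw [if_neg h, ← hμQ t]
      refine tsum_congr fun s => ?_
      simp [offDiagK, if_neg h]
  -- the decreasing sequence A and the vanishing of β on the diagonal
  have hMg : ∀ n, Summable fun t : I × I => μ t * avoidG P n t := fun n =>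
    hμsum.of_nonneg_of_le (fun t => mul_nonneg (hμ0 t) (avoidG_nonneg hP n t))
      (fun t => mul_le_of_le_one_right (hμ0 t) (avoidG_le_one hP n t))
  have hMdiag : ∀ n, Summable fun t : I × I => (if t.1 = t.2 then μ t * avoidG P n t else 0) := by
    intro n
    apply (hMg n).of_nonneg_of_le
    · intro t
      split
      · exact mul_nonneg (hμ0 t) (avoidG_nonneg hP n t)
      · exact le_refl 0
    · intro t
      split
      · exact le_refl _
      · exact mul_nonneg (hμ0 t) (avoidG_nonneg hP n t)
  have hMoff : ∀ n, Summable fun t : I × I => (if t.1 = t.2 then (0:ℝ) else μ t * avoidG P n t) := by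
    intro n
    apply (hMg n).of_nonneg_of_le
    · intro t
      split
      · exact le_refl 0
      · exact mul_nonneg (hμ0 t) (avoidG_nonneg hP n t)
    · intro t
      split
      · exact mul_nonneg (hμ0 t) (avoidG_nonneg hP n t)
      · exact le_refl _
  have hArec : ∀ n : ℕ, (∑' s : I × I, μ s * avoidG P (n+1) s)
      = ∑' t : I × I, (if t.1 = t.2 then (0:ℝ) else μ t * avoidG P n t) := by
    intro n
    have h0 : ∀ s t : I × I, 0 ≤ μ s * (offDiagK P s t * avoidG P n t) := fun s t =>
      mul_nonneg (hμ0 s) (mul_nonneg (hoff.nonneg s t) (avoidG_nonneg hP n t))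
    have h1 : ∀ s : I × I, Summable fun t => μ s * (offDiagK P s t * avoidG P n t) :=
      fun s => (summable_off_mul hP (avoidG_abs_le_one hP n) s).mul_left _
    have h2 : Summable fun s : I × I => ∑' t, μ s * (offDiagK P s t * avoidG P n t) := by
      have he : ∀ s : I × I, ∑' t, μ s * (offDiagK P s t * avoidG P n t)
          = μ s * avoidG P (n+1) s := fun s => by
        rw [tsum_mul_left]
        congr 1
      exact (hMg (n+1)).congr (fun s => (he s).symm)
    calc ∑' s : I × I, μ s * avoidG P (n+1) s
        = ∑' s : I × I, ∑' t, μ s * (offDiagK P s t * avoidG P n t) := by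
          refine tsum_congr fun s => ?_
          rw [tsum_mul_left]
          congr 1
      _ = ∑' t : I × I, ∑' s, μ s * (offDiagK P s t * avoidG P n t) := (tsum_swap h0 h1 h2).symm
      _ = ∑' t : I × I, (∑' s, μ s * offDiagK P s t) * avoidG P n t := by
          refine tsum_congr fun t => ?_
          rw [← tsum_mul_right]
          exact tsum_congr fun s => by ring
      _ = ∑' t : I × I, (if t.1 = t.2 then (0:ℝ) else μ t) * avoidG P n t := by
          exact tsum_congr fun t => by rw [hμoff t]
      _ = ∑' t : I × I, (if t.1 = t.2 then (0:ℝ) else μ t * avoidG P n t) := by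
          refine tsum_congr fun t => ?_
          split
          · exact zero_mul _
          · rfl
  have hsplit : ∀ n : ℕ, (∑' t : I × I, μ t * avoidG P n t)
      = (∑' t : I × I, (if t.1 = t.2 then μ t * avoidG P n t else 0))
        + ∑' s : I × I, μ s * avoidG P (n+1) s := by
    intro n
    rw [hArec n, ← Summable.tsum_add (hMdiag n) (hMoff n)]
    refine tsum_congr fun t => ?_
    split
    · simp
    · simp
  have hdiagβ : ∀ a : I, β (a,a) = 0 := by
    have hA0 : ∀ n, 0 ≤ ∑' t : I × I, μ t * avoidG P n t := fun n =>
      tsum_nonneg fun t => mul_nonneg (hμ0 t) (avoidG_nonneg hP n t)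
    have hAanti : Antitone fun n => ∑' t : I × I, μ t * avoidG P n t := by
      apply antitone_nat_of_succ_le
      intro n
      rw [hsplit n]
      have hDn : 0 ≤ ∑' t : I × I, (if t.1 = t.2 then μ t * avoidG P n t else 0) :=
        tsum_nonneg fun t => by
          split
          · exact mul_nonneg (hμ0 t) (avoidG_nonneg hP n t)
          · exact le_refl 0
      linarith
    have hAbdd : BddBelow (Set.range fun n => ∑' t : I × I, μ t * avoidG P n t) := by
      refine ⟨0, ?_⟩
      rintro x ⟨n, rfl⟩
      exact hA0 n
    have hAtend := tendsto_atTop_ciInf hAanti hAbdd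
    have hAtend' := hAtend.comp (Filter.tendsto_add_atTop_nat 1)
    have hDg0 : Filter.Tendsto
        (fun n => (∑' t : I × I, μ t * avoidG P n t) - ∑' s : I × I, μ s * avoidG P (n+1) s)
        Filter.atTop (nhds 0) := by
      have := hAtend.sub hAtend'
      simpa using this
    intro a
    have hle : ∀ n : ℕ, μ (a,a) * β (a,a) ≤
        (∑' t : I × I, μ t * avoidG P n t) - ∑' s : I × I, μ s * avoidG P (n+1) s := by
      intro n
      have hd : (∑' t : I × I, μ t * avoidG P n t) - (∑' s : I × I, μ s * avoidG P (n+1) s)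
          = ∑' t : I × I, (if t.1 = t.2 then μ t * avoidG P n t else 0) := by
        rw [hsplit n]
        ring
      rw [hd]
      have h1 : μ (a,a) * β (a,a) ≤ μ (a,a) * avoidG P n (a,a) :=
        mul_le_mul_of_nonneg_left (hβle n (a,a)) (hμ0 (a,a))
      have h2 := Summable.le_tsum (hMdiag n) ((a,a) : I × I)
        (fun t _ => by split; exacts [mul_nonneg (hμ0 t) (avoidG_nonneg hP n t), le_refl 0])
      rw [if_pos (show ((a,a) : I × I).1 = ((a,a) : I × I).2 from rfl)] at h2
      linarith
    have hfin : μ (a,a) * β (a,a) ≤ 0 :=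
      ge_of_tendsto hDg0 (Filter.Eventually.of_forall hle)
    have hnn : 0 ≤ μ (a,a) * β (a,a) := mul_nonneg (hμ0 (a,a)) (hβ0 (a,a))
    have hz : μ (a,a) * β (a,a) = 0 := le_antisymm hfin hnn
    rcases mul_eq_zero.mp hz with h | h
    · exact absurd h (ne_of_gt (hμpos (a,a)))
    · exact h
  -- β vanishes everywhere
  have hβzero : ∀ s : I × I, β s = 0 := by
    intro s
    by_cases hd : s.1 = s.2
    · have hs : s = (s.1, s.1) := Prod.ext_iff.mpr ⟨rfl, hd.symm⟩
      rw [hs]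
      exact hdiagβ s.1
    · obtain ⟨N1, h1⟩ := eventually_pos hP hirr haper s.1 s.1
      obtain ⟨N2, h2⟩ := eventually_pos hP hirr haper s.1 s.2
      set n := max N1 N2 with hn
      have hQpos : 0 < matPowC (pairK P) n (s.1, s.1) s := by
        rw [pairPow hP]
        exact mul_pos (h1 n (le_max_left _ _)) (h2 n (le_max_right _ _))
      obtain ⟨b, m, hbm⟩ := reach_off hP n s hd s.1 hQpos
      have hprop := beta_prop hP hβ0 hβ1 hβrec m (b,b)
      rw [hdiagβ b] at hprop
      have hsumβ : Summable fun t => matPowC (offDiagK P) m (b,b) t * β t :=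
        ((hoff.matPow m).summable (b,b)).of_nonneg_of_le
          (fun t => mul_nonneg ((hoff.matPow m).nonneg (b,b) t) (hβ0 t))
          (fun t => mul_le_of_le_one_right ((hoff.matPow m).nonneg (b,b) t) (hβ1 t))
      have hterm : matPowC (offDiagK P) m (b,b) s * β s
          ≤ ∑' t, matPowC (offDiagK P) m (b,b) t * β t :=
        Summable.le_tsum hsumβ s
          (fun t _ => mul_nonneg ((hoff.matPow m).nonneg (b,b) t) (hβ0 t))
      rw [← hprop] at hterm
      have hnn : 0 ≤ matPowC (offDiagK P) m (b,b) s * β s :=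
        mul_nonneg ((hoff.matPow m).nonneg (b,b) s) (hβ0 s)
      have hz : matPowC (offDiagK P) m (b,b) s * β s = 0 := le_antisymm hterm hnn
      rcases mul_eq_zero.mp hz with h | h
      · exact absurd h (ne_of_gt hbm)
      · exact h
  -- final squeeze
  have hc : ∀ n : ℕ, |matPowC P n i j - π j| ≤ ∑' k, π k * avoidG P n (i,k) := by
    intro n
    have hπnj := hπn n j
    have hconst : HasSum (fun k => π k * matPowC P n i j) (matPowC P n i j) := by
      have := hπsum.mul_right (matPowC P n i j)
      simpa using this
    have hdiff := hconst.sub hπnj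
    have heq : (fun k => π k * matPowC P n i j - π k * matPowC P n k j)
        = fun k => π k * (matPowC P n i j - matPowC P n k j) := by
      funext k
      ring
    rw [heq] at hdiff
    have habsle : ∀ k, |matPowC P n i j - matPowC P n k j| ≤ avoidG P n (i,k) :=
      fun k => coupling_bound hP j n (i,k)
    have hsumabs : Summable fun k => |π k * (matPowC P n i j - matPowC P n k j)| := by
      apply hπsum.summable.of_nonneg_of_le (fun k => abs_nonneg _)
      intro k
      rw [abs_mul, abs_of_nonneg (hπnonneg k)]
      apply mul_le_of_le_one_right (hπnonneg k)
      exact le_trans (habsle k) (avoidG_le_one hP n (i,k))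
    calc |matPowC P n i j - π j|
        = |∑' k, π k * (matPowC P n i j - matPowC P n k j)| := by rw [hdiff.tsum_eq]
      _ ≤ ∑' k, |π k * (matPowC P n i j - matPowC P n k j)| := by
          have hnrm := norm_tsum_le_tsum_norm
            (f := fun k => π k * (matPowC P n i j - matPowC P n k j))
            (by simp only [Real.norm_eq_abs]; exact hsumabs)
          simp only [Real.norm_eq_abs] at hnrm
          exact hnrm
      _ ≤ ∑' k, π k * avoidG P n (i,k) := by
          apply Summable.tsum_le_tsum ?_ hsumabs ?_
          · intro k
            rw [abs_mul, abs_of_nonneg (hπnonneg k)]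
            exact mul_le_mul_of_nonneg_left (habsle k) (hπnonneg k)
          · apply hπsum.summable.of_nonneg_of_le
              (fun k => mul_nonneg (hπnonneg k) (avoidG_nonneg hP n (i,k)))
            exact fun k => mul_le_of_le_one_right (hπnonneg k) (avoidG_le_one hP n (i,k))
  have hczero : Filter.Tendsto (fun n => ∑' k, π k * avoidG P n (i,k))
      Filter.atTop (nhds 0) := by
    have htend := tendsto_tsum_of_dominated_convergence (𝓕 := Filter.atTop)
      (f := fun n k => π k * avoidG P n (i,k)) (g := fun k => π k * β (i,k))
      (bound := π) hπsum.summable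
      (fun k => (hGtend (i,k)).const_mul _)
      (Filter.Eventually.of_forall (fun n k => by
        rw [Real.norm_eq_abs, abs_mul, abs_of_nonneg (hπnonneg k)]
        exact mul_le_of_le_one_right (hπnonneg k) (avoidG_abs_le_one hP n (i,k))))
    have hzz : (∑' k, π k * β (i,k)) = 0 := by
      rw [tsum_congr (fun k => by rw [hβzero (i,k), mul_zero])]
      exact tsum_zero
    rw [hzz] at htend
    exact htend
  have habs0 : Filter.Tendsto (fun n => matPowC P n i j - π j) Filter.atTop (nhds 0) :=
    squeeze_zero_norm (fun n => by
      rw [Real.norm_eq_abs]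
      exact hc n) hczero
  have hfinal := habs0.add_const (π j)
  simpa using hfinal
end

section
/- Let N be odd, N ≥ 3, and let P be the transition matrix on ℤ/Nℤ with P_{i,i±2} = 1/2 each. Then for all n and all states i, j, |p_{ij}^{(n)} − 1/N| ≤ ((4^N − 1)/4^N)^{n/(2N) − 1}. -/
open scoped BigOperators

/-- The transition matrix on `ℤ/Nℤ` moving `±2 (mod N)` each with probability `1/2`. -/
noncomputable def stepTwoMatrix (N : ℕ) [NeZero N] : Matrix (ZMod N) (ZMod N) ℝ :=
  fun i j => if j = i + 2 ∨ j = i - 2 then 1 / 2 else 0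

namespace StepTwoAux

variable (N : ℕ) [NeZero N]

lemma stm_nonneg (i j : ZMod N) : (0:ℝ) ≤ stepTwoMatrix N i j := by
  simp only [stepTwoMatrix]; split <;> norm_num

lemma pow_entry_nonneg (n : ℕ) (i j : ZMod N) : (0:ℝ) ≤ ((stepTwoMatrix N)^n) i j := by
  induction n generalizing i j with
  | zero => rw [pow_zero, Matrix.one_apply]; split <;> norm_num
  | succ n ih =>
    rw [pow_succ, Matrix.mul_apply]
    exact Finset.sum_nonneg fun l _ => mul_nonneg (ih i l) (stm_nonneg N l j)

lemma two_ne (hodd : Odd N) (hN : 3 ≤ N) (i : ZMod N) : (i + 2 : ZMod N) ≠ i - 2 := by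
  intro h
  have h4 : ((4:ℕ) : ZMod N) = 0 := by push_cast; linear_combination h
  have hdvd : N ∣ 4 := (ZMod.natCast_eq_zero_iff 4 N).mp h4
  have hle : N ≤ 4 := Nat.le_of_dvd (by norm_num) hdvd
  interval_cases N
  · exact absurd hdvd (by norm_num)
  · exact absurd hodd (by decide)

lemma row_sum (hodd : Odd N) (hN : 3 ≤ N) (i : ZMod N) :
    ∑ j, stepTwoMatrix N i j = 1 := by
  have hne := two_ne N hodd hN i
  have : ∀ j : ZMod N, stepTwoMatrix N i j =
      (if j = i + 2 then (1:ℝ)/2 else 0) + (if j = i - 2 then (1:ℝ)/2 else 0) := by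
    intro j
    by_cases h1 : j = i + 2 <;> by_cases h2 : j = i - 2
    · exact absurd (h1 ▸ h2) hne
    all_goals simp [stepTwoMatrix, h1, h2, hne, Ne.symm hne]
  rw [Finset.sum_congr rfl fun j _ => this j, Finset.sum_add_distrib]
  simp [Finset.sum_ite_eq']
  norm_num

lemma stm_symm (i j : ZMod N) : stepTwoMatrix N j i = stepTwoMatrix N i j := by
  unfold stepTwoMatrix
  refine if_congr ?_ rfl rfl
  constructor
  · rintro (h | h)
    · right; rw [h]; ring
    · left; rw [h]; ring
  · rintro (h | h)
    · right; rw [h]; ring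
    · left; rw [h]; ring

lemma pow_symm (n : ℕ) (i j : ZMod N) :
    ((stepTwoMatrix N)^n) j i = ((stepTwoMatrix N)^n) i j := by
  have hT : Matrix.transpose (stepTwoMatrix N) = stepTwoMatrix N :=
    Matrix.ext fun a b => stm_symm N a b
  have h2 : Matrix.transpose ((stepTwoMatrix N)^n) = (stepTwoMatrix N)^n := by
    rw [Matrix.transpose_pow, hT]
  calc ((stepTwoMatrix N)^n) j i = Matrix.transpose ((stepTwoMatrix N)^n) i j := rfl
    _ = ((stepTwoMatrix N)^n) i j := by rw [h2]

lemma pow_row_sum (hodd : Odd N) (hN : 3 ≤ N) (n : ℕ) (i : ZMod N) :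
    ∑ j, ((stepTwoMatrix N)^n) i j = 1 := by
  induction n generalizing i with
  | zero => simp [Matrix.one_apply]
  | succ n ih =>
    rw [pow_succ]
    simp only [Matrix.mul_apply]
    rw [Finset.sum_comm]
    have : ∀ l : ZMod N, ∑ j, ((stepTwoMatrix N)^n) i l * stepTwoMatrix N l j
        = ((stepTwoMatrix N)^n) i l := by
      intro l
      rw [← Finset.mul_sum, row_sum N hodd hN l, mul_one]
    rw [Finset.sum_congr rfl fun l _ => this l, ih]

lemma pow_col_sum (hodd : Odd N) (hN : 3 ≤ N) (n : ℕ) (j : ZMod N) :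
    ∑ l, ((stepTwoMatrix N)^n) l j = 1 := by
  have : ∀ l : ZMod N, ((stepTwoMatrix N)^n) l j = ((stepTwoMatrix N)^n) j l :=
    fun l => pow_symm N n j l
  rw [Finset.sum_congr rfl fun l _ => this l, pow_row_sum N hodd hN n j]

lemma step_up (i : ZMod N) : stepTwoMatrix N i (i + 2) = 1/2 := by
  simp [stepTwoMatrix]

lemma step_down (i : ZMod N) : stepTwoMatrix N i (i - 2) = 1/2 := by
  simp [stepTwoMatrix]

lemma path_bound : ∀ (n a : ℕ) (i : ZMod N), a ≤ n →
    ((1:ℝ)/2)^n ≤ ((stepTwoMatrix N)^n) i (i + 2*(a : ZMod N) - 2*(((n - a : ℕ)) : ZMod N)) := by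
  intro n
  induction n with
  | zero =>
    intro a i ha
    interval_cases a
    simp [Matrix.one_apply]
  | succ n ih =>
    intro a i ha
    rw [pow_succ' (stepTwoMatrix N) n, Matrix.mul_apply]
    set j := i + 2*(a : ZMod N) - 2*((((n+1) - a : ℕ)) : ZMod N) with hj
    match a with
    | 0 =>
      have key := ih 0 (i - 2) (Nat.zero_le n)
      have hjl : (i - 2) + 2*((0:ℕ) : ZMod N) - 2*(((n - 0 : ℕ)) : ZMod N) = j := by
        rw [hj]; push_cast [Nat.sub_zero]; ring
      rw [hjl] at key
      calc ((1:ℝ)/2)^(n+1) = (1/2) * (1/2)^n := by ring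
        _ ≤ stepTwoMatrix N i (i-2) * ((stepTwoMatrix N)^n) (i-2) j := by
            rw [step_down]
            exact mul_le_mul_of_nonneg_left key (by norm_num)
        _ ≤ ∑ l, stepTwoMatrix N i l * ((stepTwoMatrix N)^n) l j := by
            exact Finset.single_le_sum
              (fun l _ => mul_nonneg (stm_nonneg N i l) (pow_entry_nonneg N n l j))
              (Finset.mem_univ (i - 2))
    | (a' + 1) =>
      have ha' : a' ≤ n := Nat.succ_le_succ_iff.mp ha
      have key := ih a' (i + 2) ha'
      have hjl : (i + 2) + 2*((a' : ℕ) : ZMod N) - 2*(((n - a' : ℕ)) : ZMod N) = j := by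
        rw [hj, Nat.succ_sub_succ]; push_cast; ring
      rw [hjl] at key
      calc ((1:ℝ)/2)^(n+1) = (1/2) * (1/2)^n := by ring
        _ ≤ stepTwoMatrix N i (i+2) * ((stepTwoMatrix N)^n) (i+2) j := by
            rw [step_up]
            exact mul_le_mul_of_nonneg_left key (by norm_num)
        _ ≤ ∑ l, stepTwoMatrix N i l * ((stepTwoMatrix N)^n) l j := by
            exact Finset.single_le_sum
              (fun l _ => mul_nonneg (stm_nonneg N i l) (pow_entry_nonneg N n l j))
              (Finset.mem_univ (i + 2))

lemma minorization (hodd : Odd N) (hN : 3 ≤ N) (i j : ZMod N) :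
    (1:ℝ)/4^N ≤ ((stepTwoMatrix N)^(2*N)) i j := by
  have h4u : IsUnit (4 : ZMod N) := by
    have h2 : Nat.Coprime 2 N := hodd.coprime_two_left
    have h4 : Nat.Coprime 4 N := by
      have := Nat.Coprime.pow_left 2 h2
      norm_num at this
      exact this
    have := (ZMod.isUnit_iff_coprime 4 N).mpr h4
    simpa using this
  set a : ℕ := ((4 : ZMod N)⁻¹ * (j - i)).val with haa
  have ha : a < N := ZMod.val_lt _
  have haN : a ≤ 2*N := by omega
  have key := path_bound N (2*N) a i haN
  have hcast : ((a : ℕ) : ZMod N) = (4 : ZMod N)⁻¹ * (j - i) :=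
    ZMod.natCast_rightInverse _
  have h1 : (((2*N - a : ℕ)) : ZMod N) = - ((a : ℕ) : ZMod N) := by
    rw [Nat.cast_sub haN]
    push_cast [ZMod.natCast_self]
    ring
  have hinv : (4 : ZMod N) * ((4 : ZMod N)⁻¹ * (j - i)) = j - i := by
    rw [← mul_assoc, ZMod.mul_inv_of_unit _ h4u, one_mul]
  have htarget : i + 2*((a : ℕ) : ZMod N) - 2*(((2*N - a : ℕ)) : ZMod N) = j := by
    rw [h1, hcast]
    linear_combination hinv
  rw [htarget] at key
  calc (1:ℝ)/4^N = (1/2)^(2*N) := by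
        rw [pow_mul]; norm_num [div_pow]
    _ ≤ _ := key

noncomputable def MM (n : ℕ) (j : ZMod N) : ℝ :=
  Finset.univ.sup' Finset.univ_nonempty (fun i => ((stepTwoMatrix N)^n) i j)

noncomputable def mm (n : ℕ) (j : ZMod N) : ℝ :=
  Finset.univ.inf' Finset.univ_nonempty (fun i => ((stepTwoMatrix N)^n) i j)

lemma le_MM (n : ℕ) (i j : ZMod N) : ((stepTwoMatrix N)^n) i j ≤ MM N n j := by
  unfold MM; exact Finset.le_sup' (fun i => ((stepTwoMatrix N)^n) i j) (Finset.mem_univ i)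

lemma mm_le (n : ℕ) (i j : ZMod N) : mm N n j ≤ ((stepTwoMatrix N)^n) i j := by
  unfold mm; exact Finset.inf'_le (fun i => ((stepTwoMatrix N)^n) i j) (Finset.mem_univ i)

lemma mm_le_MM (n : ℕ) (j : ZMod N) : mm N n j ≤ MM N n j :=
  le_trans (mm_le N n 0 j) (le_MM N n 0 j)

lemma MM_zero_le_one (j : ZMod N) : MM N 0 j ≤ 1 := by
  unfold MM
  apply Finset.sup'_le
  intro i _
  rw [pow_zero, Matrix.one_apply]
  split <;> norm_num

lemma mm_zero_nonneg (j : ZMod N) : 0 ≤ mm N 0 j := by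
  unfold mm
  apply Finset.le_inf'
  intro i _
  exact pow_entry_nonneg N 0 i j

lemma MM_mono (hodd : Odd N) (hN : 3 ≤ N) (k n : ℕ) (j : ZMod N) :
    MM N (k + n) j ≤ MM N n j := by
  conv_lhs => unfold MM
  apply Finset.sup'_le
  intro i _
  rw [pow_add, Matrix.mul_apply]
  calc ∑ l, ((stepTwoMatrix N)^k) i l * ((stepTwoMatrix N)^n) l j
      ≤ ∑ l, ((stepTwoMatrix N)^k) i l * MM N n j := by
        refine Finset.sum_le_sum fun l _ => ?_
        exact mul_le_mul_of_nonneg_left (le_MM N n l j) (pow_entry_nonneg N k i l)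
    _ = (∑ l, ((stepTwoMatrix N)^k) i l) * MM N n j := by rw [Finset.sum_mul]
    _ = MM N n j := by rw [pow_row_sum N hodd hN k i, one_mul]

lemma mm_mono (hodd : Odd N) (hN : 3 ≤ N) (k n : ℕ) (j : ZMod N) :
    mm N n j ≤ mm N (k + n) j := by
  conv_rhs => unfold mm
  apply Finset.le_inf'
  intro i _
  rw [pow_add, Matrix.mul_apply]
  calc mm N n j = (∑ l, ((stepTwoMatrix N)^k) i l) * mm N n j := by
        rw [pow_row_sum N hodd hN k i, one_mul]
    _ = ∑ l, ((stepTwoMatrix N)^k) i l * mm N n j := by rw [Finset.sum_mul]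
    _ ≤ ∑ l, ((stepTwoMatrix N)^k) i l * ((stepTwoMatrix N)^n) l j := by
        refine Finset.sum_le_sum fun l _ => ?_
        exact mul_le_mul_of_nonneg_left (mm_le N n l j) (pow_entry_nonneg N k i l)

lemma weight_sum (hodd : Odd N) (hN : 3 ≤ N) (i : ZMod N) :
    ∑ l, (((stepTwoMatrix N)^(2*N)) i l - (1:ℝ)/4^N) = 1 - N * ((1:ℝ)/4^N) := by
  rw [Finset.sum_sub_distrib, pow_row_sum N hodd hN (2*N) i, Finset.sum_const,
    Finset.card_univ, ZMod.card, nsmul_eq_mul]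

lemma contract (hodd : Odd N) (hN : 3 ≤ N) (n : ℕ) (j : ZMod N) :
    MM N (2*N + n) j - mm N (2*N + n) j ≤
      ((4:ℝ)^N - 1)/4^N * (MM N n j - mm N n j) := by
  set δ : ℝ := (1:ℝ)/4^N with hδ
  have hup : ∀ i : ZMod N, ((stepTwoMatrix N)^(2*N + n)) i j ≤
      (1 - N * δ) * MM N n j + δ := by
    intro i
    rw [pow_add, Matrix.mul_apply]
    have hsplit : ∀ l : ZMod N,
        ((stepTwoMatrix N)^(2*N)) i l * ((stepTwoMatrix N)^n) l j =
        (((stepTwoMatrix N)^(2*N)) i l - δ) * ((stepTwoMatrix N)^n) l j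
          + δ * ((stepTwoMatrix N)^n) l j := by intro l; ring
    rw [Finset.sum_congr rfl fun l _ => hsplit l, Finset.sum_add_distrib,
      ← Finset.mul_sum, pow_col_sum N hodd hN n j, mul_one]
    have h1 : ∑ l, (((stepTwoMatrix N)^(2*N)) i l - δ) * ((stepTwoMatrix N)^n) l j
        ≤ (1 - N * δ) * MM N n j := by
      calc ∑ l, (((stepTwoMatrix N)^(2*N)) i l - δ) * ((stepTwoMatrix N)^n) l j
          ≤ ∑ l, (((stepTwoMatrix N)^(2*N)) i l - δ) * MM N n j := by
            refine Finset.sum_le_sum fun l _ => ?_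
            exact mul_le_mul_of_nonneg_left (le_MM N n l j)
              (by linarith [minorization N hodd hN i l])
        _ = (1 - N * δ) * MM N n j := by
            rw [← Finset.sum_mul, weight_sum N hodd hN i]
    linarith
  have hlo : ∀ i : ZMod N, (1 - N * δ) * mm N n j + δ ≤
      ((stepTwoMatrix N)^(2*N + n)) i j := by
    intro i
    rw [pow_add, Matrix.mul_apply]
    have hsplit : ∀ l : ZMod N,
        ((stepTwoMatrix N)^(2*N)) i l * ((stepTwoMatrix N)^n) l j =
        (((stepTwoMatrix N)^(2*N)) i l - δ) * ((stepTwoMatrix N)^n) l j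
          + δ * ((stepTwoMatrix N)^n) l j := by intro l; ring
    rw [Finset.sum_congr rfl fun l _ => hsplit l, Finset.sum_add_distrib,
      ← Finset.mul_sum, pow_col_sum N hodd hN n j, mul_one]
    have h1 : (1 - N * δ) * mm N n j
        ≤ ∑ l, (((stepTwoMatrix N)^(2*N)) i l - δ) * ((stepTwoMatrix N)^n) l j := by
      calc (1 - N * δ) * mm N n j
          = ∑ l, (((stepTwoMatrix N)^(2*N)) i l - δ) * mm N n j := by
            rw [← Finset.sum_mul, weight_sum N hodd hN i]
        _ ≤ ∑ l, (((stepTwoMatrix N)^(2*N)) i l - δ) * ((stepTwoMatrix N)^n) l j := by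
            refine Finset.sum_le_sum fun l _ => ?_
            exact mul_le_mul_of_nonneg_left (mm_le N n l j)
              (by linarith [minorization N hodd hN i l])
    linarith
  have hMM : MM N (2*N + n) j ≤ (1 - N * δ) * MM N n j + δ := by
    unfold MM; exact Finset.sup'_le _ _ fun i _ => hup i
  have hmm : (1 - N * δ) * mm N n j + δ ≤ mm N (2*N + n) j := by
    unfold mm; exact Finset.le_inf' _ _ fun i _ => hlo i
  have h4pos : (0:ℝ) < 4^N := by positivity
  have hNle : (N:ℝ) ≤ 4^N := by
    calc (N:ℝ) ≤ 2^N := by exact_mod_cast Nat.le_of_lt (Nat.lt_two_pow_self (n := N))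
      _ ≤ 4^N := by
        apply pow_le_pow_left₀ (by norm_num) (by norm_num)
  have hθ : 1 - N * δ ≤ ((4:ℝ)^N - 1)/4^N := by
    rw [hδ, le_div_iff₀ h4pos]
    have hN1 : (1:ℝ) ≤ N := by exact_mod_cast Nat.one_le_iff_ne_zero.mpr (NeZero.ne N)
    have hexp : (1 - (N:ℝ) * (1/4^N)) * 4^N = 4^N - N := by field_simp
    rw [hexp]; linarith
  have hstep : MM N (2*N + n) j - mm N (2*N + n) j ≤
      (1 - N * δ) * (MM N n j - mm N n j) := by
    have hexp : (1 - (N:ℝ) * δ) * (MM N n j - mm N n j) =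
        ((1 - N * δ) * MM N n j + δ) - ((1 - N * δ) * mm N n j + δ) := by ring
    rw [hexp]
    linarith
  exact le_trans hstep
    (mul_le_mul_of_nonneg_right hθ (sub_nonneg.mpr (mm_le_MM N n j)))

lemma decay (hodd : Odd N) (hN : 3 ≤ N) (q : ℕ) (j : ZMod N) :
    MM N (2*N*q) j - mm N (2*N*q) j ≤ (((4:ℝ)^N - 1)/4^N) ^ q := by
  induction q with
  | zero =>
    simpa using sub_le_sub (MM_zero_le_one N j) (mm_zero_nonneg N j)
  | succ q ih =>
    have h2 : 2*N*(q+1) = 2*N + 2*N*q := by ring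
    rw [h2, pow_succ]
    calc MM N (2*N + 2*N*q) j - mm N (2*N + 2*N*q) j
        ≤ ((4:ℝ)^N - 1)/4^N * (MM N (2*N*q) j - mm N (2*N*q) j) :=
          contract N hodd hN (2*N*q) j
      _ ≤ ((4:ℝ)^N - 1)/4^N * (((4:ℝ)^N - 1)/4^N) ^ q := by
          apply mul_le_mul_of_nonneg_left ih
          apply div_nonneg _ (by positivity)
          have h1 : (1:ℝ) = 1^N := (one_pow N).symm
          nlinarith [pow_le_pow_left₀ (by norm_num : (0:ℝ) ≤ 1) (by norm_num : (1:ℝ) ≤ 4) N]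
      _ = (((4:ℝ)^N - 1)/4^N) ^ q * (((4:ℝ)^N - 1)/4^N) := by ring

lemma inv_le_MM (hodd : Odd N) (hN : 3 ≤ N) (n : ℕ) (j : ZMod N) :
    1/(N:ℝ) ≤ MM N n j := by
  have hNpos : (0:ℝ) < N := by
    exact_mod_cast Nat.pos_of_ne_zero (NeZero.ne N)
  have h1 : (1:ℝ) ≤ N * MM N n j := by
    calc (1:ℝ) = ∑ l, ((stepTwoMatrix N)^n) l j := (pow_col_sum N hodd hN n j).symm
      _ ≤ ∑ _l : ZMod N, MM N n j := Finset.sum_le_sum fun l _ => le_MM N n l j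
      _ = N * MM N n j := by
          rw [Finset.sum_const, Finset.card_univ, ZMod.card, nsmul_eq_mul]
  rw [div_le_iff₀ hNpos]
  linarith
lemma mm_le_inv (hodd : Odd N) (hN : 3 ≤ N) (n : ℕ) (j : ZMod N) :
    mm N n j ≤ 1/(N:ℝ) := by
  have hNpos : (0:ℝ) < N := by
    exact_mod_cast Nat.pos_of_ne_zero (NeZero.ne N)
  have h1 : (N:ℝ) * mm N n j ≤ 1 := by
    calc (N:ℝ) * mm N n j = ∑ _l : ZMod N, mm N n j := by
          rw [Finset.sum_const, Finset.card_univ, ZMod.card, nsmul_eq_mul]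
      _ ≤ ∑ l, ((stepTwoMatrix N)^n) l j := Finset.sum_le_sum fun l _ => mm_le N n l j
      _ = 1 := pow_col_sum N hodd hN n j
  rw [le_div_iff₀ hNpos]
  linarith

end StepTwoAux

/-- Theorem: explicit rate of convergence to the uniform distribution for the
`±2 (mod N)` random walk, `N` odd: `|p_{ij}^{(n)} - 1/N| ≤ ((4^N-1)/4^N)^{n/(2N)-1}`. -/
theorem stepTwo_convergence_rate (N : ℕ) [NeZero N] (hodd : Odd N) (hN : 3 ≤ N) :
    ∀ (n : ℕ) (i j : ZMod N),
      |((stepTwoMatrix N) ^ n) i j - 1 / (N : ℝ)| ≤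
        (((4 : ℝ) ^ N - 1) / 4 ^ N) ^ ((n : ℝ) / (2 * (N : ℝ)) - 1) := by
  intro n i j
  open StepTwoAux in
  set θ : ℝ := ((4:ℝ)^N - 1)/4^N with hθdef
  have h4pos : (0:ℝ) < 4^N := by positivity
  have h4big : (4:ℝ) < 4^N := by
    calc (4:ℝ) = 4^1 := (pow_one 4).symm
      _ < 4^N := by
        apply pow_lt_pow_right₀ (by norm_num) (by omega)
  have hθ0 : 0 < θ := by
    rw [hθdef]
    apply div_pos _ h4pos
    linarith
  have hθ1 : θ ≤ 1 := by
    rw [hθdef, div_le_one h4pos]; linarith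
  set q : ℕ := n / (2*N) with hq
  have hNpos : 0 < N := Nat.pos_of_ne_zero (NeZero.ne N)
  have hqle : 2*N*q ≤ n := by
    rw [hq, mul_comm]
    exact Nat.div_mul_le_self n (2*N)
  -- step 1: |p - 1/N| ≤ MM n j - mm n j
  have h1 : |((stepTwoMatrix N) ^ n) i j - 1 / (N : ℝ)| ≤ MM N n j - mm N n j := by
    rw [abs_le]
    constructor
    · linarith [mm_le N n i j, inv_le_MM N hodd hN n j]
    · linarith [le_MM N n i j, mm_le_inv N hodd hN n j]
  -- step 2: monotonicity down to multiple of 2N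
  have h2 : MM N n j - mm N n j ≤ MM N (2*N*q) j - mm N (2*N*q) j := by
    have hsplit : n = (n - 2*N*q) + 2*N*q := by omega
    have hM := MM_mono N hodd hN (n - 2*N*q) (2*N*q) j
    have hm := mm_mono N hodd hN (n - 2*N*q) (2*N*q) j
    rw [← hsplit] at hM hm
    linarith
  -- step 3: decay
  have h3 : MM N (2*N*q) j - mm N (2*N*q) j ≤ θ ^ q := decay N hodd hN q j
  -- step 4: compare exponents
  have h4 : θ ^ q ≤ θ ^ ((n : ℝ) / (2 * (N : ℝ)) - 1) := by
    rw [← Real.rpow_natCast θ q]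
    apply Real.rpow_le_rpow_of_exponent_ge hθ0 hθ1
    have hlt : n < 2*N*(q+1) := by
      have hmod : n % (2*N) < 2*N := Nat.mod_lt _ (by omega)
      have hdm : 2*N*q + n % (2*N) = n := by rw [hq]; exact Nat.div_add_mod n (2*N)
      calc n = 2*N*q + n % (2*N) := hdm.symm
        _ < 2*N*q + 2*N := Nat.add_lt_add_left hmod _
        _ = 2*N*(q+1) := by ring
    have h2Npos : (0:ℝ) < 2*(N:ℝ) := by positivity
    rw [sub_le_iff_le_add, div_le_iff₀ h2Npos]
    have : (n:ℝ) < 2*N*(q+1) := by exact_mod_cast hlt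
    push_cast
    nlinarith
  calc |((stepTwoMatrix N) ^ n) i j - 1 / (N : ℝ)| ≤ MM N n j - mm N n j := h1
    _ ≤ MM N (2*N*q) j - mm N (2*N*q) j := h2
    _ ≤ θ ^ q := h3
    _ ≤ θ ^ ((n : ℝ) / (2 * (N : ℝ)) - 1) := h4
end

section
/- For all x with |x| < π/2, cos(x) ≤ e^{−x²/2}. -/
open Real

/-- Theorem: for `|x| < π/2`, `cos x ≤ e^{-x²/2}`. -/
theorem cos_le_exp_neg_sq_div_two (x : ℝ) (hx : |x| < π / 2) :
    Real.cos x ≤ Real.exp (-x ^ 2 / 2) := by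
  -- reduce to x ≥ 0
  wlog hx0 : 0 < x generalizing x
  · push_neg at hx0
    rcases eq_or_lt_of_le hx0 with h | h
    · subst h; simp
    · have := this (-x) (by rwa [abs_neg]) (by linarith)
      simpa using this
  have hpi : π < 3.15 := Real.pi_lt_d2
  have hx2 : x < 2 := by
    have := abs_lt.mp hx
    linarith [this.2]
  -- lower bound for exp
  have he : Real.exp (-x ^ 2 / 4) ≥ 1 - x ^ 2 / 4 := by
    have := Real.add_one_le_exp (-x ^ 2 / 4)
    linarith
  have hnn : (0:ℝ) ≤ 1 - x ^ 2 / 4 := by nlinarith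
  have hesq : Real.exp (-x ^ 2 / 2) = Real.exp (-x ^ 2 / 4) ^ 2 := by
    rw [← Real.exp_nat_mul]
    norm_num
    ring_nf
  have he2 : Real.exp (-x ^ 2 / 2) ≥ (1 - x ^ 2 / 4) ^ 2 := by
    rw [hesq]
    exact pow_le_pow_left₀ hnn he 2
  -- upper bound for cos
  have hs : x / 2 - (x / 2) ^ 3 / 4 < Real.sin (x / 2) := by
    have := Real.sin_gt_sub_cube (x := x / 2) (by linarith)
    nlinarith [pow_pos hx0 3]
  have hsp : (0:ℝ) ≤ x / 2 - (x / 2) ^ 3 / 4 := by nlinarith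
  have hc : Real.cos x = 1 - 2 * Real.sin (x / 2) ^ 2 := by
    have h1 := Real.cos_two_mul (x / 2)
    have h2 := Real.sin_sq_add_cos_sq (x / 2)
    have : (2 : ℝ) * (x / 2) = x := by ring
    rw [this] at h1
    linarith
  have hcle : Real.cos x ≤ 1 - 2 * (x / 2 - (x / 2) ^ 3 / 4) ^ 2 := by
    rw [hc]
    nlinarith [sq_nonneg (Real.sin (x/2))]
  refine hcle.trans (le_trans ?_ he2)
  nlinarith [pow_pos hx0 6]
end
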